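/- Correctness of the LCA computation: if x, y < |uf| and rep_of uf x = rep_of uf y, then ufa_lca uf x y — defined as the last element of the longest common prefix of awalk_verts_from_rep uf x and awalk_verts_from_rep uf y — is a lowest common ancestor of x and y in the union-find forest: it is an ancestor of both x and y, and any common ancestor of x and y is an ancestor of it. -/

import Mathlib

/-- Proof terms for equalities. -/
inductive EqPrf (α : Type*) where
  | assm (i : ℕ)
  | refl (x : α)
  | sym (p : EqPrf α)
  | trans (p₁ p₂ : EqPrf α)

/-- The judgment `us ⊢ p : (x, y)`. -/
inductive Proves {α : Type*} (us : List (α × α)) : EqPrf α → α × α → Prop where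
  | assm (i : ℕ) (x y : α) (hi : i < us.length) (h : us.get ⟨i, hi⟩ = (x, y)) :
      Proves us (.assm i) (x, y)
  | refl (x : α) : Proves us (.refl x) (x, x)
  | sym (p : EqPrf α) (x y : α) : Proves us p (x, y) → Proves us (.sym p) (y, x)
  | trans (p₁ p₂ : EqPrf α) (x y z : α) :
      Proves us p₁ (x, y) → Proves us p₂ (y, z) → Proves us (.trans p₁ p₂) (x, z)

/-- Symmetric closure of a relation given as a set of pairs. -/
def symcl {α : Type*} (r : Set (α × α)) : Set (α × α) := r ∪ {p | (p.2, p.1) ∈ r}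

/-- Equivalence closure: reflexive transitive closure of the symmetric closure. -/
def equivcl {α : Type*} (r : Set (α × α)) : Set (α × α) :=
  {p | Relation.ReflTransGen (fun a b => (a, b) ∈ symcl r) p.1 p.2}

/-- Parent pointer of element `i` in the union-find list `l`. -/
def parentOf (l : List ℕ) (i : ℕ) : ℕ := l.getD i 0

/-- Domain (termination) predicate of the representative function. -/
inductive RepOfDom (l : List ℕ) : ℕ → Prop where
  | base (i : ℕ) (h : parentOf l i = i) : RepOfDom l i
  | step (i : ℕ) (h : parentOf l i ≠ i) (ih : RepOfDom l (parentOf l i)) : RepOfDom l i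

/-- Fuelled iteration of parent pointers. -/
def repOfAux (l : List ℕ) : ℕ → ℕ → ℕ
  | 0, i => i
  | n + 1, i => if parentOf l i = i then i else repOfAux l n (parentOf l i)

/-- Representative of `i`: follow parent pointers to a self-loop
(the fuel `l.length` suffices on well-formed structures). -/
def repOf (l : List ℕ) (i : ℕ) : ℕ := repOfAux l l.length i

/-- Union-find invariant. -/
def ufaInvar (l : List ℕ) : Prop := ∀ i < l.length, RepOfDom l i ∧ parentOf l i < l.length

/-- Abstraction: the partial equivalence relation represented by `l`. -/
def ufaα (l : List ℕ) : Set (ℕ × ℕ) :=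
  {p | p.1 < l.length ∧ p.2 < l.length ∧ repOf l p.1 = repOf l p.2}

/-- Union operation. -/
def ufaUnion (l : List ℕ) (x y : ℕ) : List ℕ := l.set (repOf l x) (repOf l y)

/-- Apply a list of unions. -/
def ufaUnions (l : List ℕ) (us : List (ℕ × ℕ)) : List ℕ :=
  us.foldl (fun l p => ufaUnion l p.1 p.2) l

/-- Initial union-find structure on `n` elements. -/
def ufaInit (n : ℕ) : List ℕ := List.range n

/-- Field of a relation given as a set of pairs. -/
def relField (r : Set (ℕ × ℕ)) : Set ℕ := {x | (∃ y, (x, y) ∈ r) ∨ ∃ y, (y, x) ∈ r}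

/-- Merging the equivalence classes of `x` and `y` in a partial equivalence relation. -/
def perUnion (R : Set (ℕ × ℕ)) (x y : ℕ) : Set (ℕ × ℕ) :=
  R ∪ {p | (p.1, x) ∈ R ∧ (y, p.2) ∈ R} ∪ {p | (p.1, y) ∈ R ∧ (x, p.2) ∈ R}

/-- Effective union. -/
def effUnion (l : List ℕ) (a b : ℕ) : Prop :=
  a ∈ relField (ufaα l) ∧ b ∈ relField (ufaα l) ∧ repOf l a ≠ repOf l b

/-- Effective list of unions. -/
def effUnions : List ℕ → List (ℕ × ℕ) → Prop
  | _, [] => True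
  | l, (a, b) :: us => effUnion l a b ∧ effUnions (ufaUnion l a b) us

/-- Arc of the union-find forest: from the parent of `c` to `c`, for non-roots `c`. -/
def ufaArc (l : List ℕ) (p c : ℕ) : Prop :=
  c < l.length ∧ parentOf l c = p ∧ p ≠ c

/-- `vs` is the vertex list of a directed walk from `x` to `y` in the forest of `l`. -/
def IsPathVerts (l : List ℕ) (x y : ℕ) (vs : List ℕ) : Prop :=
  vs.head? = some x ∧ vs.getLast? = some y ∧ List.Chain' (ufaArc l) vs

/-- Fuelled computation of the vertices on the path from the representative to `x`. -/
def awalkVertsAux (l : List ℕ) : ℕ → ℕ → List ℕ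
  | 0, x => [x]
  | n + 1, x => if parentOf l x = x then [x] else awalkVertsAux l n (parentOf l x) ++ [x]

/-- The vertices on the path from `repOf l x` to `x`. -/
def awalkVertsFromRep (l : List ℕ) (x : ℕ) : List ℕ := awalkVertsAux l l.length x

/-- Longest common prefix of two lists. -/
def longestCommonPrefix : List ℕ → List ℕ → List ℕ
  | a :: as, b :: bs => if a = b then a :: longestCommonPrefix as bs else []
  | _, _ => []

/-- Lowest common ancestor computation. -/
def ufaLca (l : List ℕ) (x y : ℕ) : ℕ :=
  (longestCommonPrefix (awalkVertsFromRep l x) (awalkVertsFromRep l y)).getLastD 0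

/-- Associated union of an element in the state `(uf, us)`:
the index of the union that set its parent pointer. -/
def auDs (uf : List ℕ) (us : List (ℕ × ℕ)) (z : ℕ) : Option ℕ :=
  if h : us = [] then none
  else
    if z = repOf (ufaUnions uf us.dropLast) (us.getLast h).1 then some us.dropLast.length
    else auDs uf us.dropLast z
termination_by us.length
decreasing_by
  simp only [List.length_dropLast]
  have : us ≠ [] := h
  have := List.length_pos_of_ne_nil this
  omega

/-- Max on `Option ℕ` with `none` least. -/
def omax : Option ℕ → Option ℕ → Option ℕ
  | none, b => b
  | some i, none => some i
  | some i, some j => some (max i j)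

/-- Order on `Option ℕ` with `none` least. -/
def ole : Option ℕ → Option ℕ → Prop
  | none, _ => True
  | some _, none => False
  | some i, some j => i ≤ j

/-- Fuelled search for the newest associated union on the path from `d` up to `a`. -/
def findNewestAux (l : List ℕ) (au : ℕ → Option ℕ) : ℕ → ℕ → ℕ → Option ℕ
  | 0, _, _ => none
  | n + 1, a, d => if a = d then none else omax (au d) (findNewestAux l au n a (parentOf l d))

/-- Newest associated union on the path from ancestor `a` down to `d`
in the state `(uf, us)`. -/
def findNewestOnPath (uf : List ℕ) (us : List (ℕ × ℕ)) (a d : ℕ) : Option ℕ :=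
  findNewestAux (ufaUnions uf us) (auDs uf us) (ufaUnions uf us).length a d

/-- The naive explain operation, recursing by rolling back the last union. -/
def explain (uf : List ℕ) (us : List (ℕ × ℕ)) (x y : ℕ) : EqPrf ℕ :=
  if h : us = [] then .refl x
  else
    if repOf (ufaUnions uf us.dropLast) x = repOf (ufaUnions uf us.dropLast) y then
      explain uf us.dropLast x y
    else if repOf (ufaUnions uf us.dropLast) x =
        repOf (ufaUnions uf us.dropLast) (us.getLast h).1 then
      .trans (.trans (explain uf us.dropLast x (us.getLast h).1) (.assm us.dropLast.length))
        (explain uf us.dropLast (us.getLast h).2 y)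
    else
      .trans (.trans (explain uf us.dropLast x (us.getLast h).2)
          (.sym (.assm us.dropLast.length)))
        (explain uf us.dropLast (us.getLast h).1 y)
termination_by us.length
decreasing_by
  all_goals
    simp only [List.length_dropLast]
    have : us ≠ [] := h
    have := List.length_pos_of_ne_nil this
    omega

/-- Newest union on the path from the lca to `x`. -/
def newestX (uf : List ℕ) (us : List (ℕ × ℕ)) (x y : ℕ) : Option ℕ :=
  findNewestOnPath uf us (ufaLca (ufaUnions uf us) x y) x

/-- Newest union on the path from the lca to `y`. -/
def newestY (uf : List ℕ) (us : List (ℕ × ℕ)) (x y : ℕ) : Option ℕ :=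
  findNewestOnPath uf us (ufaLca (ufaUnions uf us) x y) y

/-- The union recorded at a given (optional) index. -/
def unionAt (us : List (ℕ × ℕ)) (n : Option ℕ) : ℕ × ℕ := us.getD (n.getD 0) (0, 0)

/-- Domain (termination) predicate of the efficient explain operation. -/
inductive Explain'Dom (uf : List ℕ) (us : List (ℕ × ℕ)) : ℕ → ℕ → Prop where
  | refl (x : ℕ) : Explain'Dom uf us x x
  | newest_x (x y : ℕ) (hne : x ≠ y)
      (hle : ole (newestY uf us x y) (newestX uf us x y))
      (h1 : Explain'Dom uf us x (unionAt us (newestX uf us x y)).1)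
      (h2 : Explain'Dom uf us (unionAt us (newestX uf us x y)).2 y) :
      Explain'Dom uf us x y
  | newest_y (x y : ℕ) (hne : x ≠ y)
      (hgt : ¬ ole (newestY uf us x y) (newestX uf us x y))
      (h1 : Explain'Dom uf us x (unionAt us (newestY uf us x y)).2)
      (h2 : Explain'Dom uf us (unionAt us (newestY uf us x y)).1 y) :
      Explain'Dom uf us x y

/-- Recursion graph of the efficient explain operation `explain'`. -/
inductive Explain'G (uf : List ℕ) (us : List (ℕ × ℕ)) : ℕ → ℕ → EqPrf ℕ → Prop where
  | refl (x : ℕ) : Explain'G uf us x x (.refl x)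
  | newest_x (x y : ℕ) (px py : EqPrf ℕ) (hne : x ≠ y)
      (hle : ole (newestY uf us x y) (newestX uf us x y))
      (h1 : Explain'G uf us x (unionAt us (newestX uf us x y)).1 px)
      (h2 : Explain'G uf us (unionAt us (newestX uf us x y)).2 y py) :
      Explain'G uf us x y
        (.trans (.trans px (.assm ((newestX uf us x y).getD 0))) py)
  | newest_y (x y : ℕ) (px py : EqPrf ℕ) (hne : x ≠ y)
      (hgt : ¬ ole (newestY uf us x y) (newestX uf us x y))
      (h1 : Explain'G uf us x (unionAt us (newestY uf us x y)).2 px)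
      (h2 : Explain'G uf us (unionAt us (newestY uf us x y)).1 y py) :
      Explain'G uf us x y
        (.trans (.trans px (.sym (.assm ((newestY uf us x y).getD 0)))) py)

section LcaAux

/-- `d` is the depth of `x`: iterating parents `d` times reaches a root,
and no earlier. -/
def IsDepth (l : List ℕ) (x d : ℕ) : Prop :=
  parentOf l ((parentOf l)^[d] x) = (parentOf l)^[d] x ∧
    ∀ i < d, parentOf l ((parentOf l)^[i] x) ≠ (parentOf l)^[i] x

theorem isDepth_stab' {l : List ℕ} {x d : ℕ} (hd : IsDepth l x d) :
    ∀ k, d ≤ k → (parentOf l)^[k] x = (parentOf l)^[d] x := by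
  intro k hk
  induction k with
  | zero => have : d = 0 := by omega
            subst this; rfl
  | succ k ih =>
    rcases Nat.lt_or_ge d (k + 1) with h1 | h1
    · rw [Function.iterate_succ_apply', ih (by omega), hd.1]
    · have : d = k + 1 := by omega
      subst this; rfl

theorem isDepth_unique {l : List ℕ} {x d d' : ℕ}
    (h1 : IsDepth l x d) (h2 : IsDepth l x d') : d = d' := by
  by_contra hne
  rcases Nat.lt_or_ge d d' with hlt | hge
  · exact h2.2 d hlt h1.1
  · exact h1.2 d' (by omega) h2.1

theorem exists_isDepth {l : List ℕ} {x : ℕ} (h : RepOfDom l x) : ∃ d, IsDepth l x d := by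
  induction h with
  | base i hi => exact ⟨0, hi, fun i hi' => by omega⟩
  | step i hi _ ih =>
    obtain ⟨d, hd1, hd2⟩ := ih
    refine ⟨d + 1, ?_, ?_⟩
    · rw [Function.iterate_succ_apply]; exact hd1
    · intro j hj
      cases j with
      | zero => simpa using hi
      | succ j => rw [Function.iterate_succ_apply]; exact hd2 j (by omega)

theorem iterate_parent_lt {l : List ℕ} (h : ufaInvar l) {x : ℕ} (hx : x < l.length) :
    ∀ i, (parentOf l)^[i] x < l.length := by
  intro i
  induction i with
  | zero => exact hx
  | succ i ih => rw [Function.iterate_succ_apply']; exact (h _ ih).2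

theorem isDepth_iterate_ne {l : List ℕ} {x d : ℕ} (hd : IsDepth l x d) :
    ∀ i j, i < j → j ≤ d → (parentOf l)^[i] x ≠ (parentOf l)^[j] x := by
  intro i j hij hjd heq
  set f := parentOf l with hf
  have hper : ∀ m, f^[m * (j - i)] (f^[i] x) = f^[i] x := by
    intro m
    induction m with
    | zero => simp
    | succ m ih =>
      have he : (m + 1) * (j - i) = (j - i) + m * (j - i) := by ring
      rw [he, Function.iterate_add_apply, ih, ← Function.iterate_add_apply]
      have he2 : (j - i) + i = j := by omega
      rw [he2]
      exact heq.symm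
  have hbig : d * (j - i) + i ≥ d := by
    have hji : 1 ≤ j - i := by omega
    calc d ≤ d * (j - i) := Nat.le_mul_of_pos_right d (by omega)
    _ ≤ d * (j - i) + i := by omega
  have h1 : f^[d * (j - i) + i] x = f^[i] x := by
    rw [Function.iterate_add_apply]; exact hper d
  have h2 : f^[d * (j - i) + i] x = f^[d] x := isDepth_stab' hd _ hbig
  have : f^[i] x = f^[d] x := h1.symm.trans h2
  exact hd.2 i (by omega) (by rw [this]; exact hd.1)

theorem isDepth_lt_length {l : List ℕ} (h : ufaInvar l) {x d : ℕ}
    (hx : x < l.length) (hd : IsDepth l x d) : d < l.length := by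
  have hnodup : ((List.range (d + 1)).map (fun i => (parentOf l)^[i] x)).Nodup := by
    refine List.Nodup.map_on ?_ List.nodup_range
    intro i hi j hj hij
    rw [List.mem_range] at hi hj
    by_contra hne
    rcases Nat.lt_or_ge i j with hlt | hge
    · exact isDepth_iterate_ne hd i j hlt (by omega) hij
    · exact isDepth_iterate_ne hd j i (by omega) (by omega) hij.symm
  have hsub : ((List.range (d + 1)).map (fun i => (parentOf l)^[i] x)).toFinset ⊆
      Finset.range l.length := by
    intro z hz
    rw [List.mem_toFinset, List.mem_map] at hz
    obtain ⟨i, _, rfl⟩ := hz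
    rw [Finset.mem_range]
    exact iterate_parent_lt h hx i
  have := Finset.card_le_card hsub
  rw [List.toFinset_card_of_nodup hnodup, Finset.card_range, List.length_map,
    List.length_range] at this
  omega

/-- The canonical list of vertices from depth-`d` ancestor down to `x`. -/
def wlist (l : List ℕ) : ℕ → ℕ → List ℕ
  | 0, x => [x]
  | d + 1, x => wlist l d (parentOf l x) ++ [x]

theorem mem_wlist {l : List ℕ} {z : ℕ} :
    ∀ {d x}, z ∈ wlist l d x ↔ ∃ i ≤ d, z = (parentOf l)^[i] x := by
  intro d
  induction d with
  | zero =>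
    intro x
    simp only [wlist, List.mem_singleton]
    constructor
    · rintro rfl; exact ⟨0, le_refl _, rfl⟩
    · rintro ⟨i, hi, rfl⟩
      have : i = 0 := by omega
      subst this; rfl
  | succ d ih =>
    intro x
    simp only [wlist, List.mem_append, List.mem_singleton, ih]
    constructor
    · rintro (⟨i, hi, rfl⟩ | rfl)
      · exact ⟨i + 1, by omega, by rw [Function.iterate_succ_apply]⟩
      · exact ⟨0, by omega, rfl⟩
    · rintro ⟨i, hi, rfl⟩
      cases i with
      | zero => right; rfl
      | succ i => left; exact ⟨i, by omega, by rw [Function.iterate_succ_apply]⟩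

theorem wlist_ne_nil (l : List ℕ) (d x : ℕ) : wlist l d x ≠ [] := by
  cases d <;> simp [wlist]

theorem wlist_getLast? (l : List ℕ) (d x : ℕ) : (wlist l d x).getLast? = some x := by
  cases d with
  | zero => rfl
  | succ d => rw [wlist, List.getLast?_concat]

theorem wlist_head? (l : List ℕ) :
    ∀ d x, (wlist l d x).head? = some ((parentOf l)^[d] x)
  | 0, x => rfl
  | d + 1, x => by
    rw [wlist, List.head?_append, wlist_head? l d (parentOf l x),
      Function.iterate_succ_apply]
    rfl

theorem isDepth_parent {l : List ℕ} {x d : ℕ} (hd : IsDepth l x (d + 1)) :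
    IsDepth l (parentOf l x) d := by
  refine ⟨?_, fun i hi => ?_⟩
  · have := hd.1
    rwa [Function.iterate_succ_apply] at this
  · have := hd.2 (i + 1) (by omega)
    rwa [Function.iterate_succ_apply] at this

theorem isDepth_shift {l : List ℕ} {x d : ℕ} (hd : IsDepth l x d) {i : ℕ} (hi : i ≤ d) :
    IsDepth l ((parentOf l)^[i] x) (d - i) := by
  refine ⟨?_, fun j hj => ?_⟩
  · rw [← Function.iterate_add_apply]
    have he : d - i + i = d := by omega
    rw [he]; exact hd.1
  · rw [← Function.iterate_add_apply]
    exact hd.2 (j + i) (by omega)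

theorem wlist_chain' {l : List ℕ} (h : ufaInvar l) :
    ∀ d x, x < l.length → IsDepth l x d → List.Chain' (ufaArc l) (wlist l d x)
  | 0, x, _, _ => by exact List.isChain_singleton x
  | d + 1, x, hx, hd => by
    rw [wlist]
    refine List.IsChain.append
      (wlist_chain' h d _ ((h x hx).2) (isDepth_parent hd)) (by simp) ?_
    intro a ha b hb
    rw [wlist_getLast?] at ha
    simp only [Option.mem_def, Option.some.injEq] at ha hb
    rw [List.head?_cons] at hb
    simp only [Option.some.injEq] at hb
    subst ha; subst hb
    refine ⟨hx, rfl, ?_⟩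
    have := hd.2 0 (by omega)
    simpa using this

theorem awalkVertsAux_eq {l : List ℕ} :
    ∀ n d x, IsDepth l x d → d ≤ n → awalkVertsAux l n x = wlist l d x := by
  intro n
  induction n with
  | zero =>
    intro d x hd hdn
    have : d = 0 := by omega
    subst this; rfl
  | succ n ih =>
    intro d x hd hdn
    rw [awalkVertsAux]
    split_ifs with hfx
    · have hd0 : d = 0 := by
        by_contra h0
        exact hd.2 0 (by omega) hfx
      subst hd0; rfl
    · cases d with
      | zero => exact absurd hd.1 hfx
      | succ d =>
        rw [ih d _ (isDepth_parent hd) (by omega)]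
        rfl

theorem repOfAux_eq {l : List ℕ} :
    ∀ n d x, IsDepth l x d → d ≤ n → repOfAux l n x = (parentOf l)^[d] x := by
  intro n
  induction n with
  | zero =>
    intro d x hd hdn
    have : d = 0 := by omega
    subst this; rfl
  | succ n ih =>
    intro d x hd hdn
    rw [repOfAux]
    split_ifs with hfx
    · have hd0 : d = 0 := by
        by_contra h0
        exact hd.2 0 (by omega) hfx
      subst hd0; rfl
    · cases d with
      | zero => exact absurd hd.1 hfx
      | succ d =>
        rw [ih d _ (isDepth_parent hd) (by omega), Function.iterate_succ_apply]

theorem lcp_prefix_left : ∀ a b : List ℕ, longestCommonPrefix a b <+: a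
  | [], b => by cases b <;> simp [longestCommonPrefix]
  | a :: as, [] => by simp [longestCommonPrefix]
  | a :: as, b :: bs => by
    rw [longestCommonPrefix]
    split_ifs with hab
    · subst hab
      rw [List.cons_prefix_cons]
      exact ⟨rfl, lcp_prefix_left as bs⟩
    · simp

theorem lcp_prefix_right : ∀ a b : List ℕ, longestCommonPrefix a b <+: b
  | [], b => by cases b <;> simp [longestCommonPrefix]
  | a :: as, [] => by simp [longestCommonPrefix]
  | a :: as, b :: bs => by
    rw [longestCommonPrefix]
    split_ifs with hab
    · subst hab
      rw [List.cons_prefix_cons]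
      exact ⟨rfl, lcp_prefix_right as bs⟩
    · simp

theorem prefix_lcp : ∀ (p a b : List ℕ), p <+: a → p <+: b →
    p <+: longestCommonPrefix a b
  | [], _, _, _, _ => List.nil_prefix
  | c :: p, [], b, ha, hb => by
    simp at ha
  | c :: p, a, [], ha, hb => by
    simp at hb
  | c :: p, a :: as, b :: bs, ha, hb => by
    rw [List.cons_prefix_cons] at ha hb
    obtain ⟨rfl, ha'⟩ := ha
    obtain ⟨rfl, hb'⟩ := hb
    rw [longestCommonPrefix, if_pos rfl, List.cons_prefix_cons]
    exact ⟨rfl, prefix_lcp p as bs ha' hb'⟩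

theorem chain'_reach {R : ℕ → ℕ → Prop} :
    ∀ (vs : List ℕ) {z t : ℕ}, List.Chain' R vs → z ∈ vs → vs.getLast? = some t →
      Relation.ReflTransGen R z t
  | [], _, _, _, hz, _ => absurd hz List.not_mem_nil
  | [a], z, t, _, hz, ht => by
    simp only [List.mem_singleton] at hz
    simp only [List.getLast?_singleton, Option.some.injEq] at ht
    subst hz; subst ht
    exact Relation.ReflTransGen.refl
  | a :: b :: vs, z, t, hc, hz, ht => by
    rw [show List.Chain' R (a :: b :: vs) ↔ _ from List.isChain_cons_cons] at hc
    have ht' : (b :: vs).getLast? = some t := by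
      rwa [List.getLast?_cons_cons] at ht
    rcases List.mem_cons.1 hz with rfl | hz
    · exact Relation.ReflTransGen.head hc.1
        (chain'_reach (b :: vs) hc.2 List.mem_cons_self ht')
    · exact chain'_reach (b :: vs) hc.2 hz ht'

theorem reach_mem_wlist {l : List ℕ} {d x z : ℕ} (hd : IsDepth l x d)
    (hr : Relation.ReflTransGen (ufaArc l) z x) : ∃ i ≤ d, z = (parentOf l)^[i] x := by
  induction hr using Relation.ReflTransGen.head_induction_on with
  | refl => exact ⟨0, by omega, rfl⟩
  | head harc _ ih =>
    obtain ⟨i, hi, rfl⟩ := ih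
    have hne : i ≠ d := by
      rintro rfl
      exact harc.2.2 (harc.2.1.symm.trans hd.1)
    refine ⟨i + 1, by omega, ?_⟩
    rw [Function.iterate_succ_apply']
    exact harc.2.1.symm

theorem wlist_prefix {l : List ℕ} :
    ∀ (i d x : ℕ), i ≤ d → wlist l (d - i) ((parentOf l)^[i] x) <+: wlist l d x := by
  intro i
  induction i with
  | zero => intro d x _; simp
  | succ i ih =>
    intro d x hid
    have h1 : wlist l (d - (i + 1)) ((parentOf l)^[i + 1] x) <+:
        wlist l (d - i) ((parentOf l)^[i] x) := by
      have he : d - i = (d - (i + 1)) + 1 := by omega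
      rw [he, wlist, Function.iterate_succ_apply']
      exact List.prefix_append _ _
    exact h1.trans (ih d x (by omega))

theorem wlist_mem_reach {l : List ℕ} (h : ufaInvar l) :
    ∀ d x, x < l.length → IsDepth l x d → ∀ z ∈ wlist l d x,
      Relation.ReflTransGen (ufaArc l) z x
  | 0, x, _, _, z, hz => by
    simp only [wlist, List.mem_singleton] at hz
    subst hz; exact Relation.ReflTransGen.refl
  | d + 1, x, hx, hd, z, hz => by
    rw [wlist, List.mem_append] at hz
    rcases hz with hz | hz
    · refine (wlist_mem_reach h d _ ((h x hx).2) (isDepth_parent hd) z hz).tail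
        ⟨hx, rfl, ?_⟩
      have := hd.2 0 (by omega)
      simpa using this
    · simp only [List.mem_singleton] at hz
      subst hz; exact Relation.ReflTransGen.refl

end LcaAux

/-- Correctness of the LCA computation: `ufaLca l x y` is a lowest common
ancestor of `x` and `y` in the union-find forest. -/
theorem ufaLca_is_lca (l : List ℕ) (h : ufaInvar l) (x y : ℕ)
    (hx : x < l.length) (hy : y < l.length)
    (hrep : repOf l x = repOf l y) :
    Relation.ReflTransGen (ufaArc l) (ufaLca l x y) x ∧
      Relation.ReflTransGen (ufaArc l) (ufaLca l x y) y ∧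
      ∀ z, Relation.ReflTransGen (ufaArc l) z x →
        Relation.ReflTransGen (ufaArc l) z y →
        Relation.ReflTransGen (ufaArc l) z (ufaLca l x y) := by
  obtain ⟨dx, hdx⟩ := exists_isDepth (h x hx).1
  obtain ⟨dy, hdy⟩ := exists_isDepth (h y hy).1
  have hdxl := isDepth_lt_length h hx hdx
  have hdyl := isDepth_lt_length h hy hdy
  have hvx : awalkVertsFromRep l x = wlist l dx x :=
    awalkVertsAux_eq _ _ _ hdx (le_of_lt hdxl)
  have hvy : awalkVertsFromRep l y = wlist l dy y :=
    awalkVertsAux_eq _ _ _ hdy (le_of_lt hdyl)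
  have hrx : repOf l x = (parentOf l)^[dx] x :=
    repOfAux_eq _ _ _ hdx (le_of_lt hdxl)
  have hry : repOf l y = (parentOf l)^[dy] y :=
    repOfAux_eq _ _ _ hdy (le_of_lt hdyl)
  have hheads : (parentOf l)^[dx] x = (parentOf l)^[dy] y := by
    rw [← hrx, ← hry, hrep]
  set P := longestCommonPrefix (wlist l dx x) (wlist l dy y) with hP
  -- P is nonempty since both lists start with the common representative
  have hPne : P ≠ [] := by
    obtain ⟨a, ta, hax⟩ : ∃ a ta, wlist l dx x = a :: ta := by
      cases hq : wlist l dx x with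
      | nil => exact absurd hq (wlist_ne_nil l dx x)
      | cons a ta => exact ⟨a, ta, rfl⟩
    obtain ⟨b, tb, hby⟩ : ∃ b tb, wlist l dy y = b :: tb := by
      cases hq : wlist l dy y with
      | nil => exact absurd hq (wlist_ne_nil l dy y)
      | cons b tb => exact ⟨b, tb, rfl⟩
    have hab : a = b := by
      have h1 := wlist_head? l dx x
      have h2 := wlist_head? l dy y
      rw [hax] at h1; rw [hby] at h2
      simp only [List.head?_cons, Option.some.injEq] at h1 h2
      rw [h1, h2, hheads]
    rw [hP, hax, hby, ← hab, longestCommonPrefix, if_pos rfl]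
    simp
  have hc : ufaLca l x y = P.getLast hPne := by
    rw [ufaLca, hvx, hvy, ← hP, List.getLastD_eq_getLast?,
      List.getLast?_eq_getLast_of_ne_nil hPne, Option.getD_some]
  have hPlast : P.getLast? = some (ufaLca l x y) := by
    rw [List.getLast?_eq_getLast_of_ne_nil hPne, hc]
  have hcmemP : ufaLca l x y ∈ P := by
    rw [hc]; exact List.getLast_mem hPne
  have hPx : P <+: wlist l dx x := lcp_prefix_left _ _
  have hPy : P <+: wlist l dy y := lcp_prefix_right _ _
  refine ⟨?_, ?_, ?_⟩
  · exact wlist_mem_reach h dx x hx hdx _ (hPx.subset hcmemP)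
  · exact wlist_mem_reach h dy y hy hdy _ (hPy.subset hcmemP)
  · intro z hzx hzy
    obtain ⟨i, hi, rfl⟩ := reach_mem_wlist hdx hzx
    obtain ⟨j, hj, hzj⟩ := reach_mem_wlist hdy hzy
    have p1 : wlist l (dx - i) ((parentOf l)^[i] x) <+: wlist l dx x :=
      wlist_prefix i dx x hi
    have p2 : wlist l (dy - j) ((parentOf l)^[j] y) <+: wlist l dy y :=
      wlist_prefix j dy y hj
    have e1 : IsDepth l ((parentOf l)^[i] x) (dx - i) := isDepth_shift hdx hi
    have e2 : IsDepth l ((parentOf l)^[i] x) (dy - j) := by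
      rw [hzj]; exact isDepth_shift hdy hj
    have hde : dx - i = dy - j := isDepth_unique e1 e2
    rw [← hzj, ← hde] at p2
    have hp : wlist l (dx - i) ((parentOf l)^[i] x) <+: P :=
      prefix_lcp _ _ _ p1 p2
    have hzP : (parentOf l)^[i] x ∈ P := by
      refine hp.subset ?_
      exact mem_wlist.mpr ⟨0, Nat.zero_le _, rfl⟩
    exact chain'_reach P ((wlist_chain' h dx x hx hdx).prefix hPx) hzP hPlast
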